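/- The (q,α)-deformed Hermite functions are generated from the ground state by iterating the creation operator: for every integer n ≥ 0 and every x ∈ ℝ \ {0} that stays nonzero under the iterations, φ_n^α(x;q) = (n!_{q,α})^{−1/2} · ((A⁺)^n φ_0^α(·;q))(x), where A⁺ is the operator on functions f : ℝ\{0} → ℝ given by (A⁺f)(x) = (q^{2α+3/2}/(√(1−q)·x)) · [ √(1+q^{−2α−1}x²) f(qx) − f_e(x) − q^{−2α−1} f_o(x) ], with f_e(x)=(f(x)+f(−x))/2 and f_o(x)=(f(x)−f(−x))/2. -/

import Mathlib

open scoped BigOperators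
open Real Filter

noncomputable section

/-- q-shifted factorial `(a;q)_n`. -/
def qPoch (a q : ℝ) (n : ℕ) : ℝ := ∏ k ∈ Finset.range n, (1 - a * q ^ k)

/-- infinite q-shifted factorial `(a;q)_∞`. -/
def qPochInf (a q : ℝ) : ℝ := ∏' k : ℕ, (1 - a * q ^ k)

/-- q-number `⟦x⟧_q = (1-q^x)/(1-q)`. -/
def qNumber (q x : ℝ) : ℝ := (1 - q ^ x) / (1 - q)

/-- generalized q-integer `⟦n⟧_{q,α}`: equals `⟦n⟧_q` for even `n` and
`⟦n+2α+1⟧_q` for odd `n` (so `⟦2m+1⟧_{q,α} = ⟦2m+2α+2⟧_q`). -/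
def qNumAlpha (q α : ℝ) (n : ℕ) : ℝ :=
  if n % 2 = 0 then qNumber q n else qNumber q (n + 2 * α + 1)

/-- generalized q-factorial `n!_{q,α}`. -/
def qFactAlpha (q α : ℝ) (n : ℕ) : ℝ := ∏ k ∈ Finset.range n, qNumAlpha q α (k + 1)

/-- generalized q-shifted factorial `(q;q)_{n,α} = (1-q)^n n!_{q,α}`. -/
def qPochAlpha (q α : ℝ) (n : ℕ) : ℝ := (1 - q) ^ n * qFactAlpha q α n

/-- generalized discrete q-Hermite II polynomials `h̃_{n,α}(x;q)`. -/
def hTilde (q α : ℝ) (n : ℕ) (x : ℝ) : ℝ :=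
  qPoch q q n * ∑ k ∈ Finset.range (n / 2 + 1),
    (-1 : ℝ) ^ k * q ^ ((k * (2 * k + 1) : ℤ) - (2 * n * k : ℤ)) * x ^ (n - 2 * k) /
      (qPoch (q ^ 2) (q ^ 2) k * qPochAlpha q α (n - 2 * k))

/-- the weight `ω_α(x;q) = e_{q²}(-q^{-2α-1}x²) = 1/∏_{k≥0}(1+q^{-2α-1}x²q^{2k})`. -/
def omegaAlpha (q α x : ℝ) : ℝ :=
  (∏' k : ℕ, (1 + q ^ (-(2 * α + 1)) * x ^ 2 * q ^ (2 * k)))⁻¹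

/-- normalization constant `c_α`. -/
def cAlpha (q α : ℝ) : ℝ :=
  Real.sqrt (qPochInf (-q ^ (-(2 * α + 1))) (q ^ 2) * qPochInf (-q ^ (2 * α + 3)) (q ^ 2) *
      qPochInf (q ^ (2 * α + 2)) (q ^ 2) /
    (2 * (1 - q) *
      (qPochInf (-q) (q ^ 2) * qPochInf (-q) (q ^ 2) * qPochInf (q ^ 2) (q ^ 2))))

/-- normalization constant `d_{n,α} = c_α q^{n²/2} (q;q)_{n,α}^{1/2} / (q;q)_n`. -/
def dAlpha (q α : ℝ) (n : ℕ) : ℝ :=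
  cAlpha q α * q ^ (((n : ℝ) ^ 2) / 2) * Real.sqrt (qPochAlpha q α n) / qPoch q q n

/-- the (q,α)-deformed Hermite functions `φ_n^α(x;q)`. -/
def phiQ (q α : ℝ) (n : ℕ) (x : ℝ) : ℝ :=
  dAlpha q α n * Real.sqrt (omegaAlpha q α x) * hTilde q α n x

/-- parity indicator `θ(n)`: 1 if `n` is odd, 0 if `n` is even. -/
def theta (n : ℕ) : ℝ := if n % 2 = 1 then 1 else 0

/-- the q-Gamma function `Γ_q(z) = (q;q)_∞ / (q^z;q)_∞ · (1-q)^{1-z}`. -/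
def qGammaF (q z : ℝ) : ℝ := qPochInf q q / qPochInf (q ^ z) q * (1 - q) ^ (1 - z)

/-- Rosenblum generalized factorial `γ_ν(n)`. -/
def gammaGen (ν : ℝ) (n : ℕ) : ℝ :=
  2 ^ n * (Nat.factorial (n / 2) : ℝ) *
    Real.Gamma (ν + (((n + 1) / 2 : ℕ) : ℝ) + 1 / 2) / Real.Gamma (ν + 1 / 2)

/-- generalized Hermite polynomials `H_n^ν(x)`. -/
def HGen (ν : ℝ) (n : ℕ) (x : ℝ) : ℝ :=
  (Nat.factorial n : ℝ) * ∑ k ∈ Finset.range (n / 2 + 1),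
    (-1 : ℝ) ^ k * (2 * x) ^ (n - 2 * k) / ((Nat.factorial k : ℝ) * gammaGen ν (n - 2 * k))

/-- Rosenblum generalized Hermite functions `φ_n^ν(x)`. -/
def phiGen (ν : ℝ) (n : ℕ) (x : ℝ) : ℝ :=
  Real.sqrt (gammaGen ν n / Real.Gamma (ν + 1 / 2)) * Real.exp (-x ^ 2 / 2) *
    HGen ν n x / ((2 : ℝ) ^ ((n : ℝ) / 2) * (Nat.factorial n : ℝ))

/-- symmetric q-number `[x]_s = (s^x - s^{-x})/(s - s^{-1})`. -/
def qNumSym (s x : ℝ) : ℝ := (s ^ x - s ^ (-x)) / (s - s⁻¹)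

/-- Euler q-exponential `e_q(z) = Σ z^k/(q;q)_k`. -/
def eExp (q z : ℝ) : ℝ := ∑' k : ℕ, z ^ k / qPoch q q k

/-- generalized q-exponential `E_{q,α}(z) = Σ q^{k(k-1)/2} z^k/(q;q)_{k,α}`. -/
def bigEAlpha (q α z : ℝ) : ℝ := ∑' k : ℕ, q ^ (k * (k - 1) / 2) * z ^ k / qPochAlpha q α k

/-- generalized q-exponential `e_{q,α}(z) = Σ z^k/(q;q)_{k,α}`. -/
def eExpAlpha (q α z : ℝ) : ℝ := ∑' k : ℕ, z ^ k / qPochAlpha q α k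

/-- the creation operator `A⁺` acting on real functions through their even and odd parts. -/
def aPlus (q α : ℝ) (f : ℝ → ℝ) (x : ℝ) : ℝ :=
  q ^ (2 * α + 3 / 2) / (Real.sqrt (1 - q) * x) *
    (Real.sqrt (1 + q ^ (-(2 * α + 1)) * x ^ 2) * f (q * x) -
      (f x + f (-x)) / 2 - q ^ (-(2 * α + 1)) * ((f x - f (-x)) / 2))

/-!
`A⁺` is a raising operator: `A⁺ φ_n = √⟦n+1⟧_{q,α} φ_{n+1}` away from `0`, and since `(A⁺ f)(x)`
only involves `f(qx)`, `f(x)` and `f(-x)`, induction on `n` gives the theorem.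

For the raising relation: `φ_n` has parity `(-1)^n`, so `f_e + q^{-2α-1} f_o = ε_n f` with
`ε_n = q^{-2α-1} λ_{n+1}`, where `λ_j = q^{2α+1}` for odd `j` and `1` otherwise. The weight
satisfies `ω_α(qx) = (1 + q^{-2α-1}x²) ω_α(x)`, which absorbs the square root in `A⁺`. What is
left is the q-difference equation
  `(1 + q^{-2α-1}x²) h̃_n(qx) - ε_n h̃_n(x)`
  `  = q^{-2α-1} q^n (1-q)⟦n+1⟧_{q,α} x h̃_{n+1}(x) / (1-q^{n+1})`,
which is checked coefficient by coefficient: writing `h̃_n = (q;q)_n ∑ c_{n,k} x^{n-2k}`, it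
reduces to a three-term relation between `c_{n,k}`, `c_{n,k+1}` and `c_{n+1,k+1}`.
-/

section QPochhammer

variable {q α : ℝ}

lemma qPoch_succ (a r : ℝ) (n : ℕ) : qPoch a r (n + 1) = qPoch a r n * (1 - a * r ^ n) :=
  Finset.prod_range_succ _ _

lemma one_sub_mul_pow_pos {a r : ℝ} (ha : 0 ≤ a) (ha1 : a < 1) (hr : 0 ≤ r) (hr1 : r ≤ 1)
    (k : ℕ) : 0 < 1 - a * r ^ k :=
  sub_pos.2 <| (mul_le_of_le_one_right ha (pow_le_one₀ hr hr1)).trans_lt ha1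

lemma qPoch_pos {a r : ℝ} (ha : 0 ≤ a) (ha1 : a < 1) (hr : 0 ≤ r) (hr1 : r ≤ 1) (n : ℕ) :
    0 < qPoch a r n :=
  Finset.prod_pos fun k _ => one_sub_mul_pow_pos ha ha1 hr hr1 k

lemma qNumber_pos {x : ℝ} (hq0 : 0 < q) (hq1 : q < 1) (hx : 0 < x) : 0 < qNumber q x :=
  div_pos (sub_pos.2 (Real.rpow_lt_one hq0.le hq1 hx)) (sub_pos.2 hq1)

lemma qNumAlpha_succ_pos (hq0 : 0 < q) (hq1 : q < 1) (hα : -1 < α) (j : ℕ) :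
    0 < qNumAlpha q α (j + 1) := by
  unfold qNumAlpha
  split_ifs
  · exact qNumber_pos hq0 hq1 (by positivity)
  · exact qNumber_pos hq0 hq1 (by push_cast; linarith [(j.cast_nonneg : (0 : ℝ) ≤ j)])

lemma qFactAlpha_succ (n : ℕ) :
    qFactAlpha q α (n + 1) = qFactAlpha q α n * qNumAlpha q α (n + 1) :=
  Finset.prod_range_succ _ _

lemma qFactAlpha_pos (hq0 : 0 < q) (hq1 : q < 1) (hα : -1 < α) (n : ℕ) :
    0 < qFactAlpha q α n :=
  Finset.prod_pos fun k _ => qNumAlpha_succ_pos hq0 hq1 hα k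

lemma qPochAlpha_pos (hq0 : 0 < q) (hq1 : q < 1) (hα : -1 < α) (n : ℕ) :
    0 < qPochAlpha q α n :=
  mul_pos (pow_pos (sub_pos.2 hq1) n) (qFactAlpha_pos hq0 hq1 hα n)

lemma qPochAlpha_zero : qPochAlpha q α 0 = 1 := by
  simp [qPochAlpha, qFactAlpha]

/-- The factor `λ_j` in `(1 - q)⟦j⟧_{q,α} = 1 - λ_j q^j`. -/
def oddFactor (q α : ℝ) (j : ℕ) : ℝ := if j % 2 = 0 then 1 else q ^ (2 * α + 1)

lemma one_sub_mul_qNumAlpha (hq0 : 0 < q) (hq1 : q ≠ 1) (j : ℕ) :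
    (1 - q) * qNumAlpha q α j = 1 - oddFactor q α j * q ^ j := by
  have : 1 - q ≠ 0 := sub_ne_zero.2 hq1.symm
  unfold qNumAlpha qNumber oddFactor
  split_ifs
  · rw [Real.rpow_natCast]
    field_simp
  · rw [add_assoc, Real.rpow_add hq0, Real.rpow_natCast]
    field_simp

lemma oddFactor_add_two_mul (j i : ℕ) : oddFactor q α (j + 2 * i) = oddFactor q α j := by
  simp [oddFactor]

lemma rpow_neg_mul_oddFactor_mul_oddFactor_succ (hq0 : 0 < q) (j : ℕ) :
    q ^ (-(2 * α + 1)) * oddFactor q α j * oddFactor q α (j + 1) = 1 := by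
  have : q ^ (2 * α + 1) ≠ 0 := (Real.rpow_pos_of_pos hq0 _).ne'
  rw [Real.rpow_neg hq0.le]
  unfold oddFactor
  split_ifs <;> first | omega | field_simp

lemma qPochAlpha_succ (hq0 : 0 < q) (hq1 : q ≠ 1) (n : ℕ) :
    qPochAlpha q α (n + 1) = qPochAlpha q α n * (1 - oddFactor q α (n + 1) * q ^ (n + 1)) := by
  rw [qPochAlpha, qPochAlpha, qFactAlpha_succ, ← one_sub_mul_qNumAlpha hq0 hq1]
  ring

lemma one_sub_oddFactor_mul_pow_pos (hq0 : 0 < q) (hq1 : q < 1) (hα : -1 < α) (j : ℕ) :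
    0 < 1 - oddFactor q α (j + 1) * q ^ (j + 1) := by
  rw [← one_sub_mul_qNumAlpha hq0 hq1.ne]
  exact mul_pos (sub_pos.2 hq1) (qNumAlpha_succ_pos hq0 hq1 hα j)

end QPochhammer

section Weight

variable {q α : ℝ}

lemma tprod_one_add_mul_pow {a r : ℝ} (hr : |r| < 1) :
    ∏' k : ℕ, (1 + a * r ^ k) = (1 + a) * ∏' k : ℕ, (1 + a * r * r ^ k) := by
  have hs : Summable fun k : ℕ => a * r * r ^ k :=
    (summable_geometric_of_abs_lt_one hr).mul_left _
  rw [tprod_eq_zero_mul' (by simpa only [pow_succ', mul_assoc] using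
    Real.multipliable_one_add_of_summable hs)]
  simp only [pow_zero, mul_one, pow_succ', mul_assoc]

lemma omegaAlpha_neg (x : ℝ) : omegaAlpha q α (-x) = omegaAlpha q α x := by
  simp [omegaAlpha]

lemma omegaAlpha_mul_left (hq0 : 0 ≤ q) (hq1 : q < 1) (x : ℝ) :
    omegaAlpha q α (q * x) = (1 + q ^ (-(2 * α + 1)) * x ^ 2) * omegaAlpha q α x := by
  have hq2 : |q ^ 2| < 1 := by
    rw [abs_of_nonneg (sq_nonneg q)]; exact pow_lt_one₀ hq0 hq1 two_ne_zero
  have ha : 0 < 1 + q ^ (-(2 * α + 1)) * x ^ 2 := by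
    have := Real.rpow_nonneg hq0 (-(2 * α + 1)); positivity
  have hprod := tprod_one_add_mul_pow (a := q ^ (-(2 * α + 1)) * x ^ 2) hq2
  simp only [omegaAlpha, pow_mul, mul_pow] at hprod ⊢
  rw [hprod, mul_inv, mul_inv_cancel_left₀ ha.ne']
  congr 2 with k
  ring

lemma sqrt_mul_sqrt_omegaAlpha_mul_left (hq0 : 0 ≤ q) (hq1 : q < 1) (x : ℝ) :
    √(1 + q ^ (-(2 * α + 1)) * x ^ 2) * √(omegaAlpha q α (q * x)) =
      (1 + q ^ (-(2 * α + 1)) * x ^ 2) * √(omegaAlpha q α x) := by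
  have ha : 0 ≤ 1 + q ^ (-(2 * α + 1)) * x ^ 2 := by
    have := Real.rpow_nonneg hq0 (-(2 * α + 1)); positivity
  rw [omegaAlpha_mul_left hq0 hq1, Real.sqrt_mul ha, ← mul_assoc, Real.mul_self_sqrt ha]

end Weight

section Coefficients

variable {q α : ℝ}

/-- The coefficient of `x^(n-2k)` in `h̃_{n,α}(x;q) / (q;q)_n`, extended by zero to `2k > n`. -/
def hCoeff (q α : ℝ) (n k : ℕ) : ℝ :=
  if 2 * k ≤ n then
    (-1) ^ k * q ^ (k * (2 * k + 1)) /
      (q ^ (2 * n * k) * qPoch (q ^ 2) (q ^ 2) k * qPochAlpha q α (n - 2 * k))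
  else 0

lemma hCoeff_of_lt {n k : ℕ} (h : n < 2 * k) : hCoeff q α n k = 0 := if_neg (by omega)

lemma hCoeff_mul_pow_mul_pow (n k j : ℕ) (x : ℝ) :
    hCoeff q α n k * x ^ (n - 2 * k) * x ^ j = hCoeff q α n k * x ^ (n + j - 2 * k) := by
  by_cases h : 2 * k ≤ n
  · rw [mul_assoc, ← pow_add, Nat.sub_add_comm h]
  · simp [hCoeff_of_lt (not_le.1 h)]

lemma hTilde_eq_sum (hq : q ≠ 0) (n : ℕ) {N : ℕ} (hN : n / 2 < N) (x : ℝ) :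
    hTilde q α n x =
      qPoch q q n * ∑ k ∈ Finset.range N, hCoeff q α n k * x ^ (n - 2 * k) := by
  rw [hTilde, ← Finset.sum_subset (Finset.range_subset_range.2 hN)]
  · congr 1
    refine Finset.sum_congr rfl fun k hk => ?_
    rw [hCoeff, if_pos (by have := Finset.mem_range.1 hk; omega), zpow_sub₀ hq]
    norm_cast
    field_simp
  · intro k _ hk
    rw [hCoeff_of_lt (by simp at hk; omega), zero_mul]

lemma hCoeff_zero (n : ℕ) : hCoeff q α n 0 = (qPochAlpha q α n)⁻¹ := by
  simp [hCoeff, qPoch]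

lemma hCoeff_succ_right (hq0 : 0 < q) (hq1 : q < 1) (hα : -1 < α) (m k : ℕ) :
    hCoeff q α (m + 2 * k + 2) (k + 1) * (1 - q ^ (2 * k + 2)) * q ^ (2 * m + 1) *
        qPochAlpha q α m = -hCoeff q α (m + 2 * k + 2) k * qPochAlpha q α (m + 2) := by
  have hq2 : q ^ 2 < 1 := pow_lt_one₀ hq0.le hq1 two_ne_zero
  have hQ := qPoch_pos (sq_nonneg q) hq2 (sq_nonneg q) hq2.le k
  have hW := one_sub_mul_pow_pos (sq_nonneg q) hq2 (sq_nonneg q) hq2.le k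
  have hPm := qPochAlpha_pos hq0 hq1 hα m
  have hPm2 := qPochAlpha_pos hq0 hq1 hα (m + 2)
  unfold hCoeff
  rw [if_pos (by omega), if_pos (by omega), show m + 2 * k + 2 - 2 * (k + 1) = m by omega,
    show m + 2 * k + 2 - 2 * k = m + 2 by omega, qPoch_succ]
  field_simp
  ring

lemma hCoeff_succ_succ (hq0 : 0 < q) (hq1 : q < 1) (hα : -1 < α) (j k : ℕ) :
    hCoeff q α (j + 2 * k + 2) (k + 1) * (1 - q ^ (2 * k + 2)) * q ^ (2 * j + 2 * k + 1) *
        qPochAlpha q α j = -hCoeff q α (j + 2 * k + 1) k * qPochAlpha q α (j + 1) := by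
  have hq2 : q ^ 2 < 1 := pow_lt_one₀ hq0.le hq1 two_ne_zero
  have hQ := qPoch_pos (sq_nonneg q) hq2 (sq_nonneg q) hq2.le k
  have hW := one_sub_mul_pow_pos (sq_nonneg q) hq2 (sq_nonneg q) hq2.le k
  have hPj := qPochAlpha_pos hq0 hq1 hα j
  have hPj1 := qPochAlpha_pos hq0 hq1 hα (j + 1)
  unfold hCoeff
  rw [if_pos (by omega), if_pos (by omega), show j + 2 * k + 2 - 2 * (k + 1) = j by omega,
    show j + 2 * k + 1 - 2 * k = j + 1 by omega, qPoch_succ]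
  field_simp
  ring

lemma hCoeff_rec_zero (hq0 : 0 < q) (hq1 : q < 1) (hα : -1 < α) (n : ℕ) :
    (1 - oddFactor q α (n + 1) * q ^ (n + 1)) * hCoeff q α (n + 1) 0 = hCoeff q α n 0 := by
  have := (qPochAlpha_pos hq0 hq1 hα n).ne'
  have := (one_sub_oddFactor_mul_pow_pos hq0 hq1 hα n).ne'
  rw [hCoeff_zero, hCoeff_zero, qPochAlpha_succ hq0 hq1.ne]
  field_simp

lemma hCoeff_rec_of_two_mul_add_two_le (hq0 : 0 < q) (hq1 : q < 1) (hα : -1 < α) (m k : ℕ) :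
    q ^ (-(2 * α + 1)) * q ^ m * hCoeff q α (m + 2 * k + 2) (k + 1) +
        (q ^ (m + 2) - q ^ (-(2 * α + 1)) * oddFactor q α (m + 1)) *
          hCoeff q α (m + 2 * k + 2) k =
      q ^ (-(2 * α + 1)) * q ^ (m + 2 * k + 2) *
        (1 - oddFactor q α (m + 1) * q ^ (m + 2 * k + 3)) *
          hCoeff q α (m + 2 * k + 3) (k + 1) := by
  set X := hCoeff q α (m + 2 * k + 2) k
  set Y := hCoeff q α (m + 2 * k + 2) (k + 1)
  set Z := hCoeff q α (m + 2 * k + 3) (k + 1)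
  set W := 1 - q ^ (2 * k + 2)
  have hP1 := qPochAlpha_succ (α := α) hq0 hq1.ne m
  have hP2 := qPochAlpha_succ (α := α) hq0 hq1.ne (m + 1)
  have hXZ := hCoeff_succ_succ hq0 hq1 hα (m + 1) k
  rw [show m + 1 + 1 = m + 2 by ring] at hP2 hXZ
  rw [show m + 1 + 2 * k + 2 = m + 2 * k + 3 by ring,
    show m + 1 + 2 * k + 1 = m + 2 * k + 2 by ring] at hXZ
  have hY : Y * W * q ^ (2 * m + 1) = -X *
      ((1 - oddFactor q α (m + 1) * q ^ (m + 1)) * (1 - oddFactor q α (m + 2) * q ^ (m + 2))) :=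
    mul_right_cancel₀ (qPochAlpha_pos hq0 hq1 hα m).ne'
      (by rw [hCoeff_succ_right hq0 hq1 hα m k, hP2, hP1]; ring)
  have hZ : Z * W * q ^ (2 * m + 2 * k + 3) = -X * (1 - oddFactor q α (m + 2) * q ^ (m + 2)) :=
    mul_right_cancel₀ (qPochAlpha_pos hq0 hq1 hα (m + 1)).ne'
      (by linear_combination hXZ - X * hP2)
  have hW : W * q ^ (m + 1) ≠ 0 :=
    mul_ne_zero (sub_pos.2 (pow_lt_one₀ hq0.le hq1 (by omega))).ne' (pow_ne_zero _ hq0.ne')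
  apply mul_right_cancel₀ hW
  -- after eliminating `Y` and `Z`, the identity is `q^{-2α-1} λ_{m+1} λ_{m+2} = 1`
  linear_combination q ^ (-(2 * α + 1)) * hY -
    q ^ (-(2 * α + 1)) * (1 - oddFactor q α (m + 1) * q ^ (m + 2 * k + 3)) * hZ -
    X * q ^ (2 * m + 3) * W * rpow_neg_mul_oddFactor_mul_oddFactor_succ hq0 (m + 1)

lemma hCoeff_rec (hq0 : 0 < q) (hq1 : q < 1) (hα : -1 < α) (n k : ℕ) :
    q ^ (-(2 * α + 1)) * q ^ (n - 2 * (k + 1)) * hCoeff q α n (k + 1) +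
        (q ^ (n - 2 * k) - q ^ (-(2 * α + 1)) * oddFactor q α (n + 1)) * hCoeff q α n k =
      q ^ (-(2 * α + 1)) * q ^ n * (1 - oddFactor q α (n + 1) * q ^ (n + 1)) *
        hCoeff q α (n + 1) (k + 1) := by
  have hodd0 : oddFactor q α 0 = 1 := by simp [oddFactor]
  have hc1 : q ^ (-(2 * α + 1)) * oddFactor q α 1 = 1 := by
    simpa [hodd0] using rpow_neg_mul_oddFactor_mul_oddFactor_succ (α := α) hq0 0
  rcases (by omega : 2 * k + 2 ≤ n ∨ n = 2 * k + 1 ∨ n = 2 * k ∨ n < 2 * k) with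
    h | rfl | rfl | h
  · obtain ⟨m, rfl⟩ : ∃ m, n = m + 2 * k + 2 := ⟨n - 2 * k - 2, by omega⟩
    have hodd : oddFactor q α (m + 2 * k + 2 + 1) = oddFactor q α (m + 1) := by
      rw [show m + 2 * k + 2 + 1 = m + 1 + 2 * (k + 1) by ring, oddFactor_add_two_mul]
    rw [show m + 2 * k + 2 - 2 * (k + 1) = m by omega, show m + 2 * k + 2 - 2 * k = m + 2 by omega,
      hodd]
    exact hCoeff_rec_of_two_mul_add_two_le hq0 hq1 hα m k
  · have hZ := hCoeff_succ_succ hq0 hq1 hα 0 k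
    rw [qPochAlpha_succ hq0 hq1.ne, qPochAlpha_zero, zero_add, zero_add] at hZ
    have hodd : oddFactor q α (2 * k + 1 + 1) = 1 := by
      rw [show 2 * k + 1 + 1 = 0 + 2 * (k + 1) by ring, oddFactor_add_two_mul, hodd0]
    rw [hCoeff_of_lt (n := 2 * k + 1) (k := k + 1) (by omega), hodd,
      show 2 * k + 1 - 2 * k = 1 by omega]
    linear_combination -q ^ (-(2 * α + 1)) * hZ - q * hCoeff q α (2 * k + 1) k * hc1
  · have hodd : oddFactor q α (2 * k + 1) = oddFactor q α 1 := by
      rw [add_comm, oddFactor_add_two_mul]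
    rw [hCoeff_of_lt (n := 2 * k) (k := k + 1) (by omega),
      hCoeff_of_lt (n := 2 * k + 1) (k := k + 1) (by omega), hodd, Nat.sub_self]
    linear_combination -hCoeff q α (2 * k) k * hc1
  · simp [hCoeff_of_lt, h, show n < 2 * (k + 1) by omega, show n + 1 < 2 * (k + 1) by omega]

end Coefficients

section QDifference

variable {q α : ℝ}

lemma sum_hCoeff_qDifference (hq0 : 0 < q) (hq1 : q < 1) (hα : -1 < α) (n : ℕ) (x : ℝ) :
    (1 + q ^ (-(2 * α + 1)) * x ^ 2) *
        ∑ k ∈ Finset.range (n + 2), hCoeff q α n k * (q * x) ^ (n - 2 * k) -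
      q ^ (-(2 * α + 1)) * oddFactor q α (n + 1) *
        ∑ k ∈ Finset.range (n + 2), hCoeff q α n k * x ^ (n - 2 * k) =
      q ^ (-(2 * α + 1)) * q ^ n * (1 - oddFactor q α (n + 1) * q ^ (n + 1)) * x *
        ∑ k ∈ Finset.range (n + 2), hCoeff q α (n + 1) k * x ^ (n + 1 - 2 * k) := by
  set c := q ^ (-(2 * α + 1))
  set ρ := 1 - oddFactor q α (n + 1) * q ^ (n + 1)
  have hL : ∀ k, (1 + c * x ^ 2) * (hCoeff q α n k * (q * x) ^ (n - 2 * k)) -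
      c * oddFactor q α (n + 1) * (hCoeff q α n k * x ^ (n - 2 * k)) =
      c * q ^ (n - 2 * k) * hCoeff q α n k * x ^ (n + 2 - 2 * k) +
        (q ^ (n - 2 * k) - c * oddFactor q α (n + 1)) * hCoeff q α n k * x ^ (n - 2 * k) := by
    intro k
    linear_combination c * q ^ (n - 2 * k) * hCoeff_mul_pow_mul_pow n k 2 x
  have hR : ∀ k, c * q ^ n * ρ * x * (hCoeff q α (n + 1) k * x ^ (n + 1 - 2 * k)) =
      c * q ^ n * ρ * hCoeff q α (n + 1) k * x ^ (n + 2 - 2 * k) := by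
    intro k
    linear_combination c * q ^ n * ρ * hCoeff_mul_pow_mul_pow (n + 1) k 1 x
  have hstep : ∀ k ∈ Finset.range (n + 1),
      c * q ^ (n - 2 * (k + 1)) * hCoeff q α n (k + 1) * x ^ (n + 2 - 2 * (k + 1)) +
        (q ^ (n - 2 * k) - c * oddFactor q α (n + 1)) * hCoeff q α n k * x ^ (n - 2 * k) =
      c * q ^ n * ρ * hCoeff q α (n + 1) (k + 1) * x ^ (n + 2 - 2 * (k + 1)) := by
    intro k _
    rw [show n + 2 - 2 * (k + 1) = n - 2 * k by omega]
    linear_combination x ^ (n - 2 * k) * hCoeff_rec hq0 hq1 hα n k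
  have hstart : c * q ^ (n - 2 * 0) * hCoeff q α n 0 * x ^ (n + 2 - 2 * 0) =
      c * q ^ n * ρ * hCoeff q α (n + 1) 0 * x ^ (n + 2 - 2 * 0) := by
    simp only [Nat.mul_zero, Nat.sub_zero]
    linear_combination (-c * q ^ n * x ^ (n + 2)) * hCoeff_rec_zero hq0 hq1 hα n
  rw [Finset.mul_sum, Finset.mul_sum, Finset.mul_sum, ← Finset.sum_sub_distrib,
    Finset.sum_congr rfl fun k _ => hL k, Finset.sum_congr rfl fun k _ => hR k,
    Finset.sum_add_distrib,
    Finset.sum_range_succ' (fun k => c * q ^ (n - 2 * k) * hCoeff q α n k * x ^ (n + 2 - 2 * k)),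
    Finset.sum_range_succ (fun k => (q ^ (n - 2 * k) - c * oddFactor q α (n + 1)) *
      hCoeff q α n k * x ^ (n - 2 * k)),
    Finset.sum_range_succ' (fun k => c * q ^ n * ρ * hCoeff q α (n + 1) k * x ^ (n + 2 - 2 * k)),
    hCoeff_of_lt (n := n) (k := n + 1) (by omega), ← Finset.sum_congr rfl hstep, hstart,
    Finset.sum_add_distrib]
  ring

lemma hTilde_qDifference (hq0 : 0 < q) (hq1 : q < 1) (hα : -1 < α) (n : ℕ) (x : ℝ) :
    (1 + q ^ (-(2 * α + 1)) * x ^ 2) * hTilde q α n (q * x) -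
        q ^ (-(2 * α + 1)) * oddFactor q α (n + 1) * hTilde q α n x =
      q ^ (-(2 * α + 1)) * q ^ n * ((1 - q) * qNumAlpha q α (n + 1)) * x *
        hTilde q α (n + 1) x / (1 - q ^ (n + 1)) := by
  have hW : 1 - q ^ (n + 1) ≠ 0 := (sub_pos.2 (pow_lt_one₀ hq0.le hq1 (by omega))).ne'
  rw [hTilde_eq_sum hq0.ne' n (N := n + 2) (by omega),
    hTilde_eq_sum hq0.ne' n (N := n + 2) (by omega),
    hTilde_eq_sum hq0.ne' (n + 1) (N := n + 2) (by omega), qPoch_succ, ← pow_succ',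
    one_sub_mul_qNumAlpha hq0 hq1.ne, eq_div_iff hW]
  linear_combination (1 - q ^ (n + 1)) * qPoch q q n * sum_hCoeff_qDifference hq0 hq1 hα n x

end QDifference

section Parity

variable {q α : ℝ}

lemma hTilde_neg (n : ℕ) (x : ℝ) : hTilde q α n (-x) = (-1) ^ n * hTilde q α n x := by
  rw [hTilde, hTilde, Finset.mul_sum, Finset.mul_sum, Finset.mul_sum]
  refine Finset.sum_congr rfl fun k hk => ?_
  have hsign : (-1 : ℝ) ^ n = (-1) ^ (n - 2 * k) := by
    obtain ⟨m, rfl⟩ : ∃ m, n = m + 2 * k :=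
      ⟨n - 2 * k, by have := Finset.mem_range.1 hk; omega⟩
    rw [Nat.add_sub_cancel, pow_add, pow_mul, neg_one_sq, one_pow, mul_one]
  rw [neg_pow, hsign]
  ring

lemma phiQ_neg (n : ℕ) (x : ℝ) : phiQ q α n (-x) = (-1) ^ n * phiQ q α n x := by
  rw [phiQ, phiQ, omegaAlpha_neg, hTilde_neg]
  ring

lemma aPlus_apply_of_parity (hq0 : 0 < q) {f : ℝ → ℝ} {n : ℕ} {x : ℝ}
    (hf : f (-x) = (-1) ^ n * f x) :
    aPlus q α f x = q ^ (2 * α + 3 / 2) / (√(1 - q) * x) *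
      (√(1 + q ^ (-(2 * α + 1)) * x ^ 2) * f (q * x) -
        q ^ (-(2 * α + 1)) * oddFactor q α (n + 1) * f x) := by
  rw [aPlus, hf]
  rcases n.even_or_odd with hn | hn
  · have hlam := rpow_neg_mul_oddFactor_mul_oddFactor_succ (α := α) hq0 n
    rw [show oddFactor q α n = 1 by simp [oddFactor, Nat.even_iff.1 hn], mul_one] at hlam
    rw [hn.neg_one_pow]
    linear_combination (q ^ (2 * α + 3 / 2) / (√(1 - q) * x) * f x) * hlam
  · rw [hn.neg_one_pow, show oddFactor q α (n + 1) = 1 by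
      simp [oddFactor, Nat.succ_mod_two_eq_zero_iff.2 (Nat.odd_iff.1 hn)]]
    ring

lemma aPlus_congr_of_eq_mul {f g : ℝ → ℝ} {a x : ℝ} (hqx : f (q * x) = a * g (q * x))
    (hx : f x = a * g x) (hnx : f (-x) = a * g (-x)) : aPlus q α f x = a * aPlus q α g x := by
  rw [aPlus, aPlus, hqx, hx, hnx]
  ring

end Parity

section Ladder

variable {q α : ℝ}

lemma dAlpha_succ (hq0 : 0 < q) (hq1 : q < 1) (hα : -1 < α) (n : ℕ) :
    dAlpha q α (n + 1) = dAlpha q α n * q ^ ((n : ℝ) + 1 / 2) *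
      √((1 - q) * qNumAlpha q α (n + 1)) / (1 - q ^ (n + 1)) := by
  have hpow :
      q ^ (((n + 1 : ℕ) : ℝ) ^ 2 / 2) = q ^ ((n : ℝ) ^ 2 / 2) * q ^ ((n : ℝ) + 1 / 2) := by
    rw [← Real.rpow_add hq0]
    congr 1
    push_cast
    ring
  rw [dAlpha, dAlpha, hpow, qPochAlpha, qFactAlpha_succ, qPoch_succ, ← pow_succ',
    show (1 - q) ^ (n + 1) * (qFactAlpha q α n * qNumAlpha q α (n + 1)) =
      qPochAlpha q α n * ((1 - q) * qNumAlpha q α (n + 1)) by rw [qPochAlpha]; ring,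
    Real.sqrt_mul (qPochAlpha_pos hq0 hq1 hα n).le]
  simp only [div_eq_mul_inv, mul_inv]
  ring

lemma aPlus_phiQ (hq0 : 0 < q) (hq1 : q < 1) (hα : -1 < α) (n : ℕ) {x : ℝ} (hx : x ≠ 0) :
    aPlus q α (phiQ q α n) x = √(qNumAlpha q α (n + 1)) * phiQ q α (n + 1) x := by
  have h1q : 0 < 1 - q := sub_pos.2 hq1
  have hW : 1 - q ^ (n + 1) ≠ 0 := (sub_pos.2 (pow_lt_one₀ hq0.le hq1 (by omega))).ne'
  have hK : q ^ (2 * α + 3 / 2) * q ^ (-(2 * α + 1)) = q ^ (1 / 2 : ℝ) := by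
    rw [← Real.rpow_add hq0]; ring_nf
  have hsq := sqrt_mul_sqrt_omegaAlpha_mul_left (α := α) hq0.le hq1 x
  calc aPlus q α (phiQ q α n) x
      = q ^ (2 * α + 3 / 2) / (√(1 - q) * x) * dAlpha q α n * √(omegaAlpha q α x) *
          ((1 + q ^ (-(2 * α + 1)) * x ^ 2) * hTilde q α n (q * x) -
            q ^ (-(2 * α + 1)) * oddFactor q α (n + 1) * hTilde q α n x) := by
        rw [aPlus_apply_of_parity hq0 (phiQ_neg n x), phiQ, phiQ]
        linear_combination (q ^ (2 * α + 3 / 2) / (√(1 - q) * x) * dAlpha q α n *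
          hTilde q α n (q * x)) * hsq
    _ = √(qNumAlpha q α (n + 1)) * phiQ q α (n + 1) x := by
        rw [hTilde_qDifference hq0 hq1 hα, phiQ, dAlpha_succ hq0 hq1 hα,
          Real.sqrt_mul h1q.le, Real.rpow_add hq0 (n : ℝ), Real.rpow_natCast]
        have hs := Real.sq_sqrt h1q.le
        have hN := Real.sq_sqrt (qNumAlpha_succ_pos hq0 hq1 hα n).le
        -- hide the real powers, which `field_simp` would otherwise rewrite
        generalize q ^ (2 * α + 3 / 2) = K at hK ⊢
        generalize q ^ (-(2 * α + 1)) = c at hK ⊢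
        generalize q ^ (1 / 2 : ℝ) = r at hK ⊢
        generalize √(1 - q) = s at hs ⊢
        have : s ≠ 0 := by rintro rfl; linarith [hs]
        field_simp
        rw [hs, hN, ← hK]
        ring

lemma iterate_aPlus_phiQ_zero (hq0 : 0 < q) (hq1 : q < 1) (hα : -1 < α) (n : ℕ) {x : ℝ}
    (hx : x ≠ 0) : (aPlus q α)^[n] (phiQ q α 0) x = √(qFactAlpha q α n) * phiQ q α n x := by
  induction n generalizing x with
  | zero => simp [qFactAlpha]
  | succ n ih =>
    rw [Function.iterate_succ_apply', aPlus_congr_of_eq_mul (ih (mul_ne_zero hq0.ne' hx)) (ih hx)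
      (ih (neg_ne_zero.2 hx)), aPlus_phiQ hq0 hq1 hα n hx, qFactAlpha_succ,
      Real.sqrt_mul (qFactAlpha_pos hq0 hq1 hα n).le, mul_assoc]

end Ladder

/-- the deformed Hermite functions are generated from the ground state
by iterating the creation operator. -/
theorem stmt_7 (q α : ℝ) (hq0 : 0 < q) (hq1 : q < 1) (hα : -1 < α) (n : ℕ)
    (x : ℝ) (hx : x ≠ 0) :
    phiQ q α n x =
      (Real.sqrt (qFactAlpha q α n))⁻¹ * ((aPlus q α)^[n] (phiQ q α 0)) x := by
  rw [iterate_aPlus_phiQ_zero hq0 hq1 hα n hx,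
    inv_mul_cancel_left₀ (Real.sqrt_pos.2 (qFactAlpha_pos hq0 hq1 hα n)).ne']
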